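/- For every (u¹, u², u³, u⁴) ∈ ℝ⁴, let S be the space of tuples of reals X^i_j (i, j ∈ {1,2}) and X^i_{jk} (i, j, k ∈ {1,2}, symmetric in j, k) satisfying the system: −2u¹X¹₁ + u¹X²₂ − u²X²₁ + X²₁₁ = 0; −3u¹X¹₂ − u²X¹₁ − 2u³X²₁ − X¹₁₁ + 2X²₁₂ = 0; −2u²X¹₂ − u³X²₂ − 3u⁴X²₁ − 2X¹₁₂ + X²₂₂ = 0; −u³X¹₂ + u⁴X¹₁ − 2u⁴X²₂ − X¹₂₂ = 0. Then S is a 6-dimensional linear subspace, the projection (X^i_j, X^i_{jk}) ↦ (X^i_j) maps S onto all of ℝ⁴, and the elements of S with all X^i_j = 0 are exactly the pairs (0, X^i_{jk}) with (X^i_{jk}) ∈ g². (This is the statement that the isotropy algebra of any point of J⁰π has graded space (L⁰/L¹) ⊕ g² and dimension 6.) -/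

import Mathlib

/- STATEMENT 5: for every (u¹,u²,u³,u⁴) ∈ ℝ⁴, the solution space S of the linear system
   describing the isotropy algebra of a point of J⁰π is 6-dimensional, projects onto all
   first-order components (X^i_j), and its elements with vanishing first-order part are
   exactly the elements of g². -/

/-- The space g² of arrays (X^i_{jk}), symmetric in the lower indices, satisfying
X²₁₁ = 0, X¹₁₁ − 2X²₁₂ = 0, 2X¹₁₂ − X²₂₂ = 0, X¹₂₂ = 0.
(Index value `0` stands for `1`, index value `1` stands for `2`.) -/
def g2 : Submodule ℝ (Fin 2 → Fin 2 → Fin 2 → ℝ) where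
  carrier := {X | (∀ i j k, X i j k = X i k j) ∧
    X 1 0 0 = 0 ∧ X 0 0 0 - 2 * X 1 0 1 = 0 ∧ 2 * X 0 0 1 - X 1 1 1 = 0 ∧ X 0 1 1 = 0}
  add_mem' := by
    rintro X Y ⟨hs, h1, h2, h3, h4⟩ ⟨hs', h1', h2', h3', h4'⟩
    refine ⟨fun i j k => ?_, ?_, ?_, ?_, ?_⟩ <;>
      simp only [Pi.add_apply] <;>
      first
        | rw [hs i j k, hs' i j k]
        | linarith
  zero_mem' := ⟨fun i j k => rfl, by norm_num, by norm_num, by norm_num, by norm_num⟩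
  smul_mem' := by
    rintro c X ⟨hs, h1, h2, h3, h4⟩
    refine ⟨fun i j k => ?_, ?_, ?_, ?_, ?_⟩ <;>
      simp only [Pi.smul_apply, smul_eq_mul] <;>
      first
        | rw [hs i j k]
        | linear_combination c * h1
        | linear_combination c * h2
        | linear_combination c * h3
        | linear_combination c * h4

/-- The space of tuples (X^i_j, X^i_{jk}) (second component symmetric in j, k) satisfying
    −2u¹X¹₁ + u¹X²₂ − u²X²₁ + X²₁₁ = 0;
    −3u¹X¹₂ − u²X¹₁ − 2u³X²₁ − X¹₁₁ + 2X²₁₂ = 0;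
    −2u²X¹₂ − u³X²₂ − 3u⁴X²₁ − 2X¹₁₂ + X²₂₂ = 0;
    −u³X¹₂ + u⁴X¹₁ − 2u⁴X²₂ − X¹₂₂ = 0. -/
def S (u1 u2 u3 u4 : ℝ) :
    Submodule ℝ ((Fin 2 → Fin 2 → ℝ) × (Fin 2 → Fin 2 → Fin 2 → ℝ)) where
  carrier := {X | (∀ i j k, X.2 i j k = X.2 i k j) ∧
    -2*u1*X.1 0 0 + u1*X.1 1 1 - u2*X.1 1 0 + X.2 1 0 0 = 0 ∧
    -3*u1*X.1 0 1 - u2*X.1 0 0 - 2*u3*X.1 1 0 - X.2 0 0 0 + 2*X.2 1 0 1 = 0 ∧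
    -2*u2*X.1 0 1 - u3*X.1 1 1 - 3*u4*X.1 1 0 - 2*X.2 0 0 1 + X.2 1 1 1 = 0 ∧
    -u3*X.1 0 1 + u4*X.1 0 0 - 2*u4*X.1 1 1 - X.2 0 1 1 = 0}
  add_mem' := by
    rintro X Y ⟨hs, h1, h2, h3, h4⟩ ⟨hs', h1', h2', h3', h4'⟩
    refine ⟨fun i j k => ?_, ?_, ?_, ?_, ?_⟩ <;>
      simp only [Prod.fst_add, Prod.snd_add, Pi.add_apply] <;>
      first
        | rw [hs i j k, hs' i j k]
        | linear_combination h1 + h1'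
        | linear_combination h2 + h2'
        | linear_combination h3 + h3'
        | linear_combination h4 + h4'
  zero_mem' := by
    refine ⟨fun i j k => rfl, ?_, ?_, ?_, ?_⟩ <;> simp
  smul_mem' := by
    rintro c X ⟨hs, h1, h2, h3, h4⟩
    refine ⟨fun i j k => ?_, ?_, ?_, ?_, ?_⟩ <;>
      simp only [Prod.smul_fst, Prod.smul_snd, Pi.smul_apply, smul_eq_mul] <;>
      first
        | rw [hs i j k]
        | linear_combination c * h1
        | linear_combination c * h2
        | linear_combination c * h3
        | linear_combination c * h4

/-! Each of the four equations defining `S u1 u2 u3 u4` contains exactly one of the entries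
X²₁₁, X¹₁₁, X²₂₂, X¹₂₂ with a unit coefficient, and these entries occur in no other equation.
So an element of S is determined by its first-order part X^i_j together with the two remaining
second-order entries X¹₁₂, X²₁₂, and every choice of these six numbers occurs: S ≅ ℝ⁴ × ℝ².
With X^i_j = 0 the four equations become, up to sign, those defining g². -/

namespace S

variable {u1 u2 u3 u4 : ℝ}

variable (u1 u2 u3 u4) in
/-- The element of `S u1 u2 u3 u4` with first-order part `A`, `X¹₁₂ = a` and `X²₁₂ = b`. -/
def extend (A : Fin 2 → Fin 2 → ℝ) (a b : ℝ) :
    (Fin 2 → Fin 2 → ℝ) × (Fin 2 → Fin 2 → Fin 2 → ℝ) :=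
  (A, ![![![-3*u1*A 0 1 - u2*A 0 0 - 2*u3*A 1 0 + 2*b, a],
          ![a, -u3*A 0 1 + u4*A 0 0 - 2*u4*A 1 1]],
       ![![2*u1*A 0 0 - u1*A 1 1 + u2*A 1 0, b],
          ![b, 2*u2*A 0 1 + u3*A 1 1 + 3*u4*A 1 0 + 2*a]]])

theorem extend_mem (A : Fin 2 → Fin 2 → ℝ) (a b : ℝ) :
    extend u1 u2 u3 u4 A a b ∈ S u1 u2 u3 u4 := by
  refine ⟨fun i j k => ?_, ?_, ?_, ?_, ?_⟩ <;>
    simp only [extend, Matrix.cons_val_zero, Matrix.cons_val_one]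
  · fin_cases i <;> fin_cases j <;> fin_cases k <;> rfl
  all_goals ring

theorem extend_eq_of_mem {p : (Fin 2 → Fin 2 → ℝ) × (Fin 2 → Fin 2 → Fin 2 → ℝ)}
    (hp : p ∈ S u1 u2 u3 u4) : extend u1 u2 u3 u4 p.1 (p.2 0 0 1) (p.2 1 0 1) = p := by
  obtain ⟨hsymm, h1, h2, h3, h4⟩ := hp
  refine Prod.ext rfl (funext fun i => funext fun j => funext fun k => ?_)
  fin_cases i <;> fin_cases j <;> fin_cases k <;>
    simp only [extend, Fin.zero_eta, Fin.mk_one, Fin.isValue, Matrix.cons_val_zero,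
      Matrix.cons_val_one, hsymm _ 1 0] <;> linarith

def coords : ((Fin 2 → Fin 2 → ℝ) × (Fin 2 → Fin 2 → Fin 2 → ℝ)) →ₗ[ℝ]
    (Fin 2 → Fin 2 → ℝ) × ℝ × ℝ where
  toFun p := (p.1, p.2 0 0 1, p.2 1 0 1)
  map_add' _ _ := rfl
  map_smul' _ _ := rfl

theorem bijective_coords_comp_subtype :
    Function.Bijective (coords.comp (S u1 u2 u3 u4).subtype) := by
  refine Function.bijective_iff_has_inverse.mpr
    ⟨fun c => ⟨extend u1 u2 u3 u4 c.1 c.2.1 c.2.2, extend_mem _ _ _⟩, fun p => ?_, fun c => ?_⟩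
  · exact Subtype.ext (extend_eq_of_mem p.2)
  · rfl

theorem finrank_eq_six : Module.finrank ℝ (S u1 u2 u3 u4) = 6 := by
  rw [(LinearEquiv.ofBijective _ bijective_coords_comp_subtype).finrank_eq]
  simp [Module.finrank_prod, Module.finrank_pi_fintype]

theorem zero_mk_mem_iff (Y : Fin 2 → Fin 2 → Fin 2 → ℝ) :
    ((0 : Fin 2 → Fin 2 → ℝ), Y) ∈ S u1 u2 u3 u4 ↔ Y ∈ g2 := by
  show (_ ∧ _) ↔ (_ ∧ _)
  simp only [Pi.zero_apply, mul_zero, sub_zero, add_zero, zero_add, zero_sub, neg_add_eq_zero,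
    neg_eq_zero, sub_eq_zero]

end S

/-- S is 6-dimensional, projects onto all of the first-order components, and its
elements with vanishing first-order part are exactly the pairs (0, Y) with Y ∈ g². -/
theorem stmt5 (u1 u2 u3 u4 : ℝ) :
    Module.finrank ℝ (S u1 u2 u3 u4) = 6 ∧
    (∀ A : Fin 2 → Fin 2 → ℝ, ∃ p ∈ S u1 u2 u3 u4, p.1 = A) ∧
    (∀ Y : Fin 2 → Fin 2 → Fin 2 → ℝ,
      (((0, Y) : (Fin 2 → Fin 2 → ℝ) × (Fin 2 → Fin 2 → Fin 2 → ℝ)) ∈ S u1 u2 u3 u4 ↔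
        Y ∈ g2)) :=
  ⟨S.finrank_eq_six, fun A => ⟨_, S.extend_mem A 0 0, rfl⟩, S.zero_mk_mem_iff⟩
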